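/- arXiv:2011.04765 — 5 statements merged into one kernel-verified Lean document; each statement's English description precedes it below -/
import Mathlib

section
/- Let $y$ be a nontrivial twice differentiable solution of $(r y')' + \lambda w y = 0$ on an open interval $(a,b)$, where $r, w : (a,b) \to \mathbb{R}$ are continuous with $r > 0$, $w > 0$, and $\lambda > 0$. Then strictly between any two consecutive zeros of $y$ there is exactly one point where $y' = 0$. -/
/-!
Rolle's theorem applied to `y` between its two zeros gives a stationary point. For uniqueness,
the flux `r y'` vanishes at every stationary point, while its derivative `-λ w y` has no zero
between consecutive zeros of `y`; by Rolle's theorem again the flux is injective there.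
-/

open Set

theorem Set.OrdConnected.injOn_of_deriv_ne_zero {g : ℝ → ℝ} {s : Set ℝ} (hs : s.OrdConnected)
    (hg : ∀ t ∈ s, DifferentiableAt ℝ g t) (hg' : ∀ t ∈ s, deriv g t ≠ 0) : InjOn g s := by
  suffices ∀ u ∈ s, ∀ v ∈ s, u < v → g u ≠ g v by
    intro u hu v hv huv
    by_contra hne
    rcases lt_or_gt_of_ne hne with h | h
    · exact this u hu v hv h huv
    · exact this v hv u hu h huv.symm
  intro u hu v hv huv heq
  have hIcc : Icc u v ⊆ s := hs.out hu hv
  obtain ⟨c, hc, hc0⟩ := exists_deriv_eq_zero huv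
    (fun t ht => (hg t (hIcc ht)).continuousAt.continuousWithinAt) heq
  exact hg' c (hIcc (Ioo_subset_Icc_self hc)) hc0

theorem stmt_0_general (a b : ℝ) (r w y : ℝ → ℝ) (lam : ℝ)
    (hwpos : ∀ t ∈ Ioo a b, 0 < w t)
    (hlam : 0 < lam)
    (hy : ∀ t ∈ Ioo a b, DifferentiableAt ℝ y t)
    (hry' : ∀ t ∈ Ioo a b, DifferentiableAt ℝ (fun s => r s * deriv y s) t)
    (hode : ∀ t ∈ Ioo a b,
      deriv (fun s => r s * deriv y s) t + lam * w t * y t = 0)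
    (t₁ t₂ : ℝ) (ht₁ : t₁ ∈ Ioo a b) (ht₂ : t₂ ∈ Ioo a b) (h12 : t₁ < t₂)
    (hz₁ : y t₁ = 0) (hz₂ : y t₂ = 0)
    (hconsec : ∀ t ∈ Ioo t₁ t₂, y t ≠ 0) :
    ∃! t, t ∈ Ioo t₁ t₂ ∧ deriv y t = 0 := by
  have hsub : Icc t₁ t₂ ⊆ Ioo a b := Icc_subset_Ioo ht₁.1 ht₂.2
  have hsub' : Ioo t₁ t₂ ⊆ Ioo a b := Ioo_subset_Icc_self.trans hsub
  obtain ⟨c, hc, hc0⟩ := exists_deriv_eq_zero h12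
    (fun t ht => (hy t (hsub ht)).continuousAt.continuousWithinAt) (hz₁.trans hz₂.symm)
  have hflux' : ∀ t ∈ Ioo t₁ t₂, deriv (fun s => r s * deriv y s) t ≠ 0 := by
    intro t ht hzero
    have hsource := hode t (hsub' ht)
    rw [hzero, zero_add] at hsource
    exact mul_ne_zero (mul_pos hlam (hwpos t (hsub' ht))).ne' (hconsec t ht) hsource
  have hinj : InjOn (fun s => r s * deriv y s) (Ioo t₁ t₂) :=
    ordConnected_Ioo.injOn_of_deriv_ne_zero (fun t ht => hry' t (hsub' ht)) hflux'
  exact ⟨c, ⟨hc, hc0⟩, fun d ⟨hd, hd0⟩ => hinj hd hc (by simp only [hd0, hc0, mul_zero])⟩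

/-- Between any two consecutive zeros of a nontrivial solution of the
zero-potential Sturm-Liouville equation `(r y')' + λ w y = 0` there is
exactly one stationary point. -/
theorem stmt_0 (a b : ℝ) (hab : a < b) (r w y : ℝ → ℝ) (lam : ℝ)
    (hr : ContinuousOn r (Ioo a b)) (hrpos : ∀ t ∈ Ioo a b, 0 < r t)
    (hw : ContinuousOn w (Ioo a b)) (hwpos : ∀ t ∈ Ioo a b, 0 < w t)
    (hlam : 0 < lam)
    (hy : ∀ t ∈ Ioo a b, DifferentiableAt ℝ y t)
    (hy' : ∀ t ∈ Ioo a b, DifferentiableAt ℝ (deriv y) t)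
    (hry' : ∀ t ∈ Ioo a b, DifferentiableAt ℝ (fun s => r s * deriv y s) t)
    (hode : ∀ t ∈ Ioo a b,
      deriv (fun s => r s * deriv y s) t + lam * w t * y t = 0)
    (hnontriv : ∃ t ∈ Ioo a b, y t ≠ 0)
    (t₁ t₂ : ℝ) (ht₁ : t₁ ∈ Ioo a b) (ht₂ : t₂ ∈ Ioo a b) (h12 : t₁ < t₂)
    (hz₁ : y t₁ = 0) (hz₂ : y t₂ = 0)
    (hconsec : ∀ t ∈ Ioo t₁ t₂, y t ≠ 0) :
    ∃! t, t ∈ Ioo t₁ t₂ ∧ deriv y t = 0 :=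
  stmt_0_general a b r w y lam hwpos hlam hy hry' hode t₁ t₂ ht₁ ht₂ h12 hz₁ hz₂ hconsec
end

section
/- Let $y$ be a nontrivial twice differentiable solution of $(r y')' + (\lambda w - q) y = 0$ on $(a,b)$ with $r, w, q$ continuous, $r > 0$, and $\lambda w(t) - q(t) > 0$ for all $t \in (a,b)$. Then strictly between any two consecutive stationary points of $y$ there is exactly one zero of $y$. -/
/-!
Rolle's theorem does both halves. The flux `r y'` vanishes at the two stationary points, so its
derivative vanishes somewhere in between; there the equation reads `(λ w - q) y = 0`, and
`λ w - q > 0` forces `y = 0`. Two zeros of `y` in between would, again by Rolle, produce a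
stationary point of `y` strictly between `t₁` and `t₂`.
-/

open Set

theorem Set.OrdConnected.injOn_of_deriv_ne_zero_s3 {f : ℝ → ℝ} {s : Set ℝ} (hs : s.OrdConnected)
    (hf : ContinuousOn f s) (hf' : ∀ x ∈ s, deriv f x ≠ 0) : InjOn f s := by
  have no_equal_values : ∀ x ∈ s, ∀ z ∈ s, x < z → f x ≠ f z := by
    intro x hx z hz hxz hfxz
    obtain ⟨c, hc, hfc⟩ := exists_deriv_eq_zero hxz (hf.mono (hs.out hx hz)) hfxz
    exact hf' c (hs.out hx hz (Ioo_subset_Icc_self hc)) hfc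
  intro x hx z hz hfxz
  rcases lt_trichotomy x z with hxz | hxz | hzx
  · exact absurd hfxz (no_equal_values x hx z hz hxz)
  · exact hxz
  · exact absurd hfxz.symm (no_equal_values z hz x hx hzx)

theorem exists_mem_Ioo_eq_zero_of_sturmLiouville {r p y : ℝ → ℝ} {t₁ t₂ : ℝ} (h12 : t₁ < t₂)
    (hflux : ContinuousOn (fun s => r s * deriv y s) (Icc t₁ t₂))
    (hode : ∀ t ∈ Ioo t₁ t₂, deriv (fun s => r s * deriv y s) t + p t * y t = 0)
    (hp : ∀ t ∈ Ioo t₁ t₂, p t ≠ 0) (hs₁ : deriv y t₁ = 0) (hs₂ : deriv y t₂ = 0) :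
    ∃ t ∈ Ioo t₁ t₂, y t = 0 := by
  obtain ⟨c, hc, hflux'⟩ := exists_deriv_eq_zero h12 hflux (by simp only [hs₁, hs₂, mul_zero])
  have hpy : p c * y c = 0 := by simpa [hflux'] using hode c hc
  exact ⟨c, hc, (mul_eq_zero.1 hpy).resolve_left (hp c hc)⟩

theorem stmt_3_general (a b : ℝ) (r w q y : ℝ → ℝ) (lam : ℝ)
    (heff : ∀ t ∈ Ioo a b, 0 < lam * w t - q t)
    (hy : ∀ t ∈ Ioo a b, DifferentiableAt ℝ y t)
    (hry' : ∀ t ∈ Ioo a b, DifferentiableAt ℝ (fun s => r s * deriv y s) t)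
    (hode : ∀ t ∈ Ioo a b,
      deriv (fun s => r s * deriv y s) t + (lam * w t - q t) * y t = 0)
    (t₁ t₂ : ℝ) (ht₁ : t₁ ∈ Ioo a b) (ht₂ : t₂ ∈ Ioo a b) (h12 : t₁ < t₂)
    (hs₁ : deriv y t₁ = 0) (hs₂ : deriv y t₂ = 0)
    (hconsec : ∀ t ∈ Ioo t₁ t₂, deriv y t ≠ 0) :
    ∃! t, t ∈ Ioo t₁ t₂ ∧ y t = 0 := by
  have hsub : Icc t₁ t₂ ⊆ Ioo a b := Icc_subset_Ioo ht₁.1 ht₂.2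
  have hsub' : Ioo t₁ t₂ ⊆ Ioo a b := Ioo_subset_Icc_self.trans hsub
  obtain ⟨c, hc, hyc⟩ := exists_mem_Ioo_eq_zero_of_sturmLiouville h12
    (fun t ht => (hry' t (hsub ht)).continuousAt.continuousWithinAt)
    (fun t ht => hode t (hsub' ht)) (fun t ht => (heff t (hsub' ht)).ne') hs₁ hs₂
  have hinj : InjOn y (Ioo t₁ t₂) := ordConnected_Ioo.injOn_of_deriv_ne_zero_s3
    (fun t ht => (hy t (hsub' ht)).continuousAt.continuousWithinAt) hconsec
  exact ⟨c, ⟨hc, hyc⟩, fun t ⟨ht, hyt⟩ => hinj ht hc (hyt.trans hyc.symm)⟩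

/-- For a nontrivial solution of `(r y')' + (λ w - q) y = 0` with `r > 0` and
`λ w - q > 0`, strictly between any two consecutive stationary points there is
exactly one zero. -/
theorem stmt_3 (a b : ℝ) (hab : a < b) (r w q y : ℝ → ℝ) (lam : ℝ)
    (hr : ContinuousOn r (Ioo a b)) (hrpos : ∀ t ∈ Ioo a b, 0 < r t)
    (hw : ContinuousOn w (Ioo a b)) (hq : ContinuousOn q (Ioo a b))
    (heff : ∀ t ∈ Ioo a b, 0 < lam * w t - q t)
    (hy : ∀ t ∈ Ioo a b, DifferentiableAt ℝ y t)
    (hy' : ∀ t ∈ Ioo a b, DifferentiableAt ℝ (deriv y) t)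
    (hry' : ∀ t ∈ Ioo a b, DifferentiableAt ℝ (fun s => r s * deriv y s) t)
    (hode : ∀ t ∈ Ioo a b,
      deriv (fun s => r s * deriv y s) t + (lam * w t - q t) * y t = 0)
    (hnontriv : ∃ t ∈ Ioo a b, y t ≠ 0)
    (t₁ t₂ : ℝ) (ht₁ : t₁ ∈ Ioo a b) (ht₂ : t₂ ∈ Ioo a b) (h12 : t₁ < t₂)
    (hs₁ : deriv y t₁ = 0) (hs₂ : deriv y t₂ = 0)
    (hconsec : ∀ t ∈ Ioo t₁ t₂, deriv y t ≠ 0) :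
    ∃! t, t ∈ Ioo t₁ t₂ ∧ y t = 0 :=
  stmt_3_general a b r w q y lam heff hy hry' hode t₁ t₂ ht₁ ht₂ h12 hs₁ hs₂ hconsec
end

section
/- Let $y$ be a nontrivial twice differentiable solution of $(ry')' + \lambda w y = 0$ on $(a,b)$ with $r,w$ continuous, $r,w > 0$, $\lambda > 0$. Suppose $y$ has exactly one zero $s_0$ in $(a,b)$ and satisfies $r y' \to 0$ at both endpoints. Then $y$ is strictly monotone on $(a,b)$. -/
/-!
Write `g = r y'`, so that `g' = -λ w y`. On each side of `s₀` the solution `y` keeps a constant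
sign, hence `g` is strictly monotone there; since `g → 0` at both endpoints, the sign of `g` on
each side is forced by the sign of `y`. If `y` had the same sign on both sides, the two one-sided
conclusions would disagree at `s₀`; so `y` changes sign at `s₀`, `g` (and with it `y'`) has one
strict sign on all of `(a, b)`, and `y` is strictly monotone.
-/

open Set Filter Topology

theorem IsPreconnected.forall_pos_or_forall_neg {X α : Type*} [TopologicalSpace X]
    [LinearOrder α] [TopologicalSpace α] [OrderClosedTopology α] [Zero α]
    {s : Set X} {f : X → α} (hs : IsPreconnected s) (hf : ContinuousOn f s)
    (hne : ∀ x ∈ s, f x ≠ 0) : (∀ x ∈ s, 0 < f x) ∨ ∀ x ∈ s, f x < 0 := by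
  by_contra! h
  obtain ⟨⟨x, hx, hfx⟩, z, hz, hfz⟩ := h
  obtain ⟨c, hc, hfc⟩ := hs.intermediate_value hx hz hf ⟨hfx, hfz⟩
  exact hne c hc hfc

theorem StrictAntiOn.pos_of_tendsto_nhdsLT {g : ℝ → ℝ} {c b t : ℝ}
    (hg : StrictAntiOn g (Ico c b)) (hlim : Tendsto g (𝓝[<] b) (𝓝 0)) (ht : t ∈ Ico c b) :
    0 < g t := by
  obtain ⟨u, htu, hub⟩ := exists_between ht.2
  have hu : u ∈ Ico c b := ⟨ht.1.trans htu.le, hub⟩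
  have hgu : 0 ≤ g u := le_of_tendsto hlim <| mem_of_superset (Ioo_mem_nhdsLT hub)
    fun v hv => (hg hu ⟨hu.1.trans hv.1.le, hv.2⟩ hv.1).le
  exact hgu.trans_lt (hg ht hu htu)

theorem StrictAntiOn.neg_of_tendsto_nhdsGT {g : ℝ → ℝ} {a c t : ℝ}
    (hg : StrictAntiOn g (Ioc a c)) (hlim : Tendsto g (𝓝[>] a) (𝓝 0)) (ht : t ∈ Ioc a c) :
    g t < 0 := by
  obtain ⟨u, hau, hut⟩ := exists_between ht.1
  have hu : u ∈ Ioc a c := ⟨hau, hut.le.trans ht.2⟩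
  have hgu : g u ≤ 0 := ge_of_tendsto hlim <| mem_of_superset (Ioo_mem_nhdsGT hau)
    fun v hv => (hg ⟨hv.1, hv.2.le.trans hu.2⟩ hu hv.2).le
  exact (hg hu ht hut).trans_le hgu

theorem pos_of_hasDerivAt_neg_mul {a b s₀ : ℝ} {y g q : ℝ → ℝ} (hs₀ : s₀ ∈ Ioo a b)
    (hy : ContinuousOn y (Ioo a s₀))
    (hg : ∀ t ∈ Ioo a b, HasDerivAt g (-(q t * y t)) t) (hq : ∀ t ∈ Ioo a b, 0 < q t)
    (hleft : ∀ t ∈ Ioo a s₀, y t ≠ 0) (hright : ∀ t ∈ Ioo s₀ b, 0 < y t)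
    (ha : Tendsto g (𝓝[>] a) (𝓝 0)) (hb : Tendsto g (𝓝[<] b) (𝓝 0)) :
    ∀ t ∈ Ioo a b, 0 < g t := by
  have hcont : ContinuousOn g (Ioo a b) := fun t ht =>
    (hg t ht).continuousAt.continuousWithinAt
  have hderiv : ∀ s ⊆ Ioo a b, ∀ t ∈ interior s,
      HasDerivWithinAt g (-(q t * y t)) (interior s) t := fun s hs t ht =>
    (hg t (hs (interior_subset ht))).hasDerivWithinAt
  have hanti : ∀ s ⊆ Ioo a b, Convex ℝ s → (∀ t ∈ interior s, 0 < y t) →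
      StrictAntiOn g s :=
    fun s hs hconv hpos => strictAntiOn_of_hasDerivWithinAt_neg hconv (hcont.mono hs)
      (hderiv s hs) fun t ht =>
        neg_neg_of_pos (mul_pos (hq t (hs (interior_subset ht))) (hpos t ht))
  have hmono : ∀ s ⊆ Ioo a b, Convex ℝ s → (∀ t ∈ interior s, y t < 0) →
      StrictMonoOn g s :=
    fun s hs hconv hneg => strictMonoOn_of_hasDerivWithinAt_pos hconv (hcont.mono hs)
      (hderiv s hs) fun t ht =>
        neg_pos_of_neg (mul_neg_of_pos_of_neg (hq t (hs (interior_subset ht))) (hneg t ht))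
  have hL : Ioc a s₀ ⊆ Ioo a b := Ioc_subset_Ioo_right hs₀.2
  have hR : Ico s₀ b ⊆ Ioo a b := Ico_subset_Ioo_left hs₀.1
  have hpos_right : ∀ t ∈ Ico s₀ b, 0 < g t := fun t ht =>
    (hanti _ hR (convex_Ico s₀ b) (by rwa [interior_Ico])).pos_of_tendsto_nhdsLT hb ht
  have hpos_left : ∀ t ∈ Ioc a s₀, 0 < g t := by
    rcases isPreconnected_Ioo.forall_pos_or_forall_neg hy hleft with hy_pos | hy_neg
    · have hg_s₀ := (hanti _ hL (convex_Ioc a s₀) (by rwa [interior_Ioc]))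
        |>.neg_of_tendsto_nhdsGT ha ⟨hs₀.1, le_rfl⟩
      exact absurd (hpos_right s₀ ⟨le_rfl, hs₀.2⟩) hg_s₀.not_gt
    · intro t ht
      have := (hmono _ hL (convex_Ioc a s₀) (by rwa [interior_Ioc])).neg.neg_of_tendsto_nhdsGT
        (by simpa using ha.neg) ht
      exact neg_neg_iff_pos.1 this
  intro t ht
  rcases le_or_gt t s₀ with hts | hst
  exacts [hpos_left t ⟨ht.1, hts⟩, hpos_right t ⟨hst.le, ht.2⟩]

theorem stmt_5_general (a b : ℝ) (r w y : ℝ → ℝ) (lam : ℝ)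
    (hrpos : ∀ t ∈ Ioo a b, 0 < r t)
    (hwpos : ∀ t ∈ Ioo a b, 0 < w t)
    (hlam : 0 < lam)
    (hy : ∀ t ∈ Ioo a b, DifferentiableAt ℝ y t)
    (hry' : ∀ t ∈ Ioo a b, DifferentiableAt ℝ (fun s => r s * deriv y s) t)
    (hode : ∀ t ∈ Ioo a b,
      deriv (fun s => r s * deriv y s) t + lam * w t * y t = 0)
    (s₀ : ℝ) (hs₀ : s₀ ∈ Ioo a b)
    (huniq : ∀ t ∈ Ioo a b, y t = 0 → t = s₀)
    (hbca : Tendsto (fun t => r t * deriv y t) (nhdsWithin a (Ioo a b)) (nhds 0))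
    (hbcb : Tendsto (fun t => r t * deriv y t) (nhdsWithin b (Ioo a b)) (nhds 0)) :
    StrictMonoOn y (Ioo a b) ∨ StrictAntiOn y (Ioo a b) := by
  set g := fun s => r s * deriv y s
  have hab : a < b := hs₀.1.trans hs₀.2
  have hyc : ContinuousOn y (Ioo a b) := fun t ht => (hy t ht).continuousAt.continuousWithinAt
  have hg : ∀ t ∈ Ioo a b, HasDerivAt g (-(lam * w t * y t)) t := fun t ht =>
    (hry' t ht).hasDerivAt.congr_deriv (eq_neg_of_add_eq_zero_left (hode t ht))
  have hq : ∀ t ∈ Ioo a b, 0 < lam * w t := fun t ht => mul_pos hlam (hwpos t ht)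
  have hne : ∀ t ∈ Ioo a b, t ≠ s₀ → y t ≠ 0 := fun t ht hts h0 => hts (huniq t ht h0)
  have ha : Tendsto g (𝓝[>] a) (𝓝 0) := by rwa [← nhdsWithin_Ioo_eq_nhdsGT hab]
  have hb : Tendsto g (𝓝[<] b) (𝓝 0) := by rwa [← nhdsWithin_Ioo_eq_nhdsLT hab]
  have hL : Ioo a s₀ ⊆ Ioo a b := Ioo_subset_Ioo_right hs₀.2.le
  have hR : Ioo s₀ b ⊆ Ioo a b := Ioo_subset_Ioo_left hs₀.1.le
  rcases isPreconnected_Ioo.forall_pos_or_forall_neg (hyc.mono hR)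
      (fun t ht => hne t (hR ht) ht.1.ne') with hy_pos | hy_neg
  · have hg_pos := pos_of_hasDerivAt_neg_mul hs₀ (hyc.mono hL) hg hq
      (fun t ht => hne t (hL ht) ht.2.ne) hy_pos ha hb
    refine .inl (strictMonoOn_of_deriv_pos (convex_Ioo a b) hyc fun t ht => ?_)
    rw [interior_Ioo] at ht
    exact pos_of_mul_pos_right (hg_pos t ht) (hrpos t ht).le
  · -- `g' = -q y` is invariant under `(y, g) ↦ (-y, -g)`
    have hg_neg := pos_of_hasDerivAt_neg_mul (y := fun s => -y s) (g := fun s => -g s) hs₀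
      (hyc.mono hL).neg
      (fun t ht => by rw [mul_neg]; exact (hg t ht).neg) hq
      (fun t ht => neg_ne_zero.2 (hne t (hL ht) ht.2.ne))
      (fun t ht => neg_pos.2 (hy_neg t ht)) (by simpa using ha.neg) (by simpa using hb.neg)
    refine .inr (strictAntiOn_of_deriv_neg (convex_Ioo a b) hyc fun t ht => ?_)
    rw [interior_Ioo] at ht
    exact neg_of_mul_neg_right (neg_pos.1 (hg_neg t ht)) (hrpos t ht).le

/-- A nontrivial solution of `(r y')' + λ w y = 0` with exactly one zero and
Neumann-type boundary behavior `r y' → 0` at both endpoints is strictly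
monotone on `(a, b)`. -/
theorem stmt_5 (a b : ℝ) (hab : a < b) (r w y : ℝ → ℝ) (lam : ℝ)
    (hr : ContinuousOn r (Ioo a b)) (hrpos : ∀ t ∈ Ioo a b, 0 < r t)
    (hw : ContinuousOn w (Ioo a b)) (hwpos : ∀ t ∈ Ioo a b, 0 < w t)
    (hlam : 0 < lam)
    (hy : ∀ t ∈ Ioo a b, DifferentiableAt ℝ y t)
    (hy' : ∀ t ∈ Ioo a b, DifferentiableAt ℝ (deriv y) t)
    (hry' : ∀ t ∈ Ioo a b, DifferentiableAt ℝ (fun s => r s * deriv y s) t)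
    (hode : ∀ t ∈ Ioo a b,
      deriv (fun s => r s * deriv y s) t + lam * w t * y t = 0)
    (hnontriv : ∃ t ∈ Ioo a b, y t ≠ 0)
    (s₀ : ℝ) (hs₀ : s₀ ∈ Ioo a b) (hzero : y s₀ = 0)
    (huniq : ∀ t ∈ Ioo a b, y t = 0 → t = s₀)
    (hbca : Tendsto (fun t => r t * deriv y t) (nhdsWithin a (Ioo a b)) (nhds 0))
    (hbcb : Tendsto (fun t => r t * deriv y t) (nhdsWithin b (Ioo a b)) (nhds 0)) :
    StrictMonoOn y (Ioo a b) ∨ StrictAntiOn y (Ioo a b) :=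
  stmt_5_general a b r w y lam hrpos hwpos hlam hy hry' hode s₀ hs₀ huniq hbca hbcb
end

section
/- Let $p : [x_0, \infty) \to \mathbb{R}$ be a continuously differentiable, strictly positive, integrable function with $\int_{x_0}^\infty p < \infty$, let $K : [x_0, \infty) \to \mathbb{R}$ be continuous and strictly positive, and let $g$ be twice differentiable with $g, g' > 0$ near $\infty$, satisfying $(pKg')' = -\lambda p g$ for some $\lambda > 0$, with $\lim_{s\to\infty} p g^2 = 0$, $\lim_{s\to\infty} g = \infty$, $\lim_{s\to\infty} pKg' = 0$, and $g/g'$ bounded near $\infty$. Then $\limsup_{s\to\infty} g\,p\,K\,g' \leq 0$, and since $g\,p\,K\,g' > 0$ near $\infty$, in fact $\lim_{s\to\infty} g\,p\,K\,g' = 0$. -/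
/-!
Write `g · pKg' = pKg' / g⁻¹`, a `0/0` form at `+∞`. By L'Hôpital and `(pKg')' = -λ p g`, the
quotient of derivatives is `λ (p g²) (g / g')`, which tends to `0` since `p g² → 0` and `g / g'`
is bounded.
-/

open Set Filter MeasureTheory Topology

-- L'Hôpital for `g * f = f / g⁻¹`; `hdiv` is the quotient of the derivatives of `f` and `g⁻¹`.
theorem lhopital_zero_mul_atTop {f f' g g' : ℝ → ℝ} {l : Filter ℝ}
    (hff' : ∀ᶠ x in atTop, HasDerivAt f (f' x) x)
    (hgg' : ∀ᶠ x in atTop, HasDerivAt g (g' x) x) (hg' : ∀ᶠ x in atTop, g' x ≠ 0)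
    (hftop : Tendsto f atTop (𝓝 0)) (hgtop : Tendsto g atTop atTop)
    (hdiv : Tendsto (fun x => -(g x ^ 2 * f' x) / g' x) atTop l) :
    Tendsto (fun x => g x * f x) atTop l := by
  have hgpos : ∀ᶠ x in atTop, 0 < g x := hgtop.eventually_gt_atTop 0
  have hinv : ∀ᶠ x in atTop, HasDerivAt (fun t => (g t)⁻¹) (-g' x / g x ^ 2) x := by
    filter_upwards [hgg', hgpos] with x hx hgx
    exact hx.inv hgx.ne'
  have hinv' : ∀ᶠ x in atTop, -g' x / g x ^ 2 ≠ 0 := by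
    filter_upwards [hg', hgpos] with x hx hgx
    exact div_ne_zero (neg_ne_zero.mpr hx) (pow_ne_zero 2 hgx.ne')
  have hdiv' : Tendsto (fun x => f' x / (-g' x / g x ^ 2)) atTop l := by
    refine hdiv.congr' ?_
    filter_upwards [hg', hgpos] with x hx hgx
    field_simp [hgx.ne']
  have := HasDerivAt.lhopital_zero_atTop hff' hinv hinv' hftop hgtop.inv_tendsto_atTop hdiv'
  simpa only [div_inv_eq_mul, mul_comm] using this

theorem stmt_13_general (x₀ : ℝ) (p K g : ℝ → ℝ) (lam : ℝ)
    (hlam : 0 < lam)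
    (hppos : ∀ s ∈ Ici x₀, 0 < p s)
    (hg : ∀ s ∈ Ici x₀, DifferentiableAt ℝ g s)
    (hgpos : ∀ᶠ s in atTop, 0 < g s ∧ 0 < deriv g s)
    (hode : ∀ s ∈ Ici x₀,
      deriv (fun t => p t * K t * deriv g t) s = -(lam * p s * g s))
    (hpg2 : Tendsto (fun s => p s * g s ^ 2) atTop (nhds 0))
    (hginf : Tendsto g atTop atTop)
    (hpKg' : Tendsto (fun s => p s * K s * deriv g s) atTop (nhds 0))
    (hratio : ∃ C, ∀ᶠ s in atTop, |g s / deriv g s| ≤ C) :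
    limsup (fun s => ((g s * (p s * K s * deriv g s) : ℝ) : EReal)) atTop ≤ 0 ∧
    Tendsto (fun s => g s * (p s * K s * deriv g s)) atTop (nhds 0) := by
  have hx₀ : ∀ᶠ s in atTop, s ∈ Ici x₀ := eventually_ge_atTop x₀
  -- `pKg'` is differentiable because the equation gives it a nonzero derivative.
  have hflux : ∀ᶠ s in atTop,
      HasDerivAt (fun t => p t * K t * deriv g t) (-(lam * p s * g s)) s := by
    filter_upwards [hx₀, hgpos] with s hs hgs
    have hne : -(lam * p s * g s) ≠ 0 :=
      neg_ne_zero.mpr (mul_pos (mul_pos hlam (hppos s hs)) hgs.1).ne'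
    rw [← hode s hs] at hne ⊢
    exact (differentiableAt_of_deriv_ne_zero hne).hasDerivAt
  have hdiv : Tendsto (fun s => -(g s ^ 2 * -(lam * p s * g s)) / deriv g s) atTop (𝓝 0) := by
    obtain ⟨C, hC⟩ := hratio
    have hbdd : IsBoundedUnder (· ≤ ·) atTop (norm ∘ fun s => g s / deriv g s) :=
      isBoundedUnder_of_eventually_le hC
    have hprod := (mul_zero lam ▸ hpg2.const_mul lam).zero_mul_isBoundedUnder_le hbdd
    refine hprod.congr fun s => ?_
    ring
  have hlim := lhopital_zero_mul_atTop hflux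
    (hx₀.mono fun s hs => (hg s hs).hasDerivAt) (hgpos.mono fun s hs => hs.2.ne') hpKg' hginf hdiv
  refine ⟨?_, hlim⟩
  have hcoe := (continuous_coe_real_ereal.tendsto 0).comp hlim
  exact hcoe.limsup_eq.le

/-- Boundary-term vanishing in the case `g, g' > 0` near infinity:
`limsup g p K g' ≤ 0` and hence `g p K g' → 0`. -/
theorem stmt_13 (x₀ : ℝ) (p K g : ℝ → ℝ) (lam : ℝ)
    (hlam : 0 < lam)
    (hp : ∀ s ∈ Ici x₀, DifferentiableAt ℝ p s)
    (hp' : ContinuousOn (deriv p) (Ici x₀))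
    (hppos : ∀ s ∈ Ici x₀, 0 < p s)
    (hpint : IntegrableOn p (Ici x₀))
    (hK : ContinuousOn K (Ici x₀)) (hKpos : ∀ s ∈ Ici x₀, 0 < K s)
    (hg : ∀ s ∈ Ici x₀, DifferentiableAt ℝ g s)
    (hg2 : ∀ s ∈ Ici x₀, DifferentiableAt ℝ (deriv g) s)
    (hgpos : ∀ᶠ s in atTop, 0 < g s ∧ 0 < deriv g s)
    (hode : ∀ s ∈ Ici x₀,
      deriv (fun t => p t * K t * deriv g t) s = -(lam * p s * g s))
    (hpg2 : Tendsto (fun s => p s * g s ^ 2) atTop (nhds 0))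
    (hginf : Tendsto g atTop atTop)
    (hpKg' : Tendsto (fun s => p s * K s * deriv g s) atTop (nhds 0))
    (hratio : ∃ C, ∀ᶠ s in atTop, |g s / deriv g s| ≤ C) :
    limsup (fun s => ((g s * (p s * K s * deriv g s) : ℝ) : EReal)) atTop ≤ 0 ∧
    Tendsto (fun s => g s * (p s * K s * deriv g s)) atTop (nhds 0) :=
  stmt_13_general x₀ p K g lam hlam hppos hg hgpos hode hpg2 hginf hpKg' hratio
end

section
/- Let $p, K : (a,b) \to \mathbb{R}$ be continuously differentiable with $p, K > 0$, $p' \neq 0$ near the endpoint $a$, and $p(s) \to 0$ as $s \to a^+$. Let $g$ be differentiable with $g p K g'$ bounded near $a$ and suppose $\lim_{s\to a^+} \frac{K(s)|p'(s)|}{p(s)} = \infty$. Then $\lim_{s \to a^+} p(s) g(s)^2 = 0$. -/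
/-!
Fix `δ > 0`. Near `a` the quotient `K |p'| / p` is large, so `p'` does not vanish and by
Darboux has a constant sign, which must be positive since `p > 0` and `p → 0`. The bound
`g p K g' ≥ -C` together with `K p' / p ≥ 2C / δ` then makes `g² - δ / p` nondecreasing near `a`;
comparing with a fixed point `t` gives `p g² ≤ δ + p g(t)²`, whose right side tends to `δ`.
-/

open Set Filter Topology

theorem deriv_pos_of_tendsto_nhdsGT_zero {p : ℝ → ℝ} {a u : ℝ}
    (hp : ∀ s ∈ Ioo a u, DifferentiableAt ℝ p s) (hp' : ∀ s ∈ Ioo a u, deriv p s ≠ 0)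
    (hpos : ∀ s ∈ Ioo a u, 0 < p s) (hp0 : Tendsto p (𝓝[>] a) (𝓝 0)) :
    ∀ s ∈ Ioo a u, 0 < deriv p s := by
  intro s hs
  refine (hasDerivWithinAt_forall_lt_or_forall_gt_of_forall_ne (convex_Ioo a u)
    (fun t ht => (hp t ht).hasDerivAt.hasDerivWithinAt) hp').resolve_left (fun hneg => ?_) s hs
  have hanti : StrictAntiOn p (Ioo a u) := strictAntiOn_of_deriv_neg (convex_Ioo a u)
    (fun t ht => (hp t ht).continuousAt.continuousWithinAt) (by rwa [interior_Ioo])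
  have hle : p s ≤ 0 := ge_of_tendsto hp0 <| mem_of_superset (Ioo_mem_nhdsGT hs.1)
    fun t ht => (hanti ⟨ht.1, ht.2.trans hs.2⟩ hs ht.2).le
  exact (hpos s hs).not_ge hle

theorem two_mul_mul_add_mul_div_sq_nonneg {C δ g g' p p' K : ℝ} (hp : 0 < p) (hK : 0 < K)
    (hbd : -C ≤ g * (p * K * g')) (hdiv : 2 * C * p ≤ δ * (K * p')) :
    0 ≤ 2 * g * g' + δ * p' / p ^ 2 := by
  have key : (2 * g * g' + δ * p' / p ^ 2) * (p ^ 2 * K)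
      = 2 * p * (g * (p * K * g')) + δ * (K * p') := by
    field_simp
  refine nonneg_of_mul_nonneg_left ?_ (by positivity : 0 < p ^ 2 * K)
  rw [key]
  nlinarith

theorem monotoneOn_sq_sub_div {p K g : ℝ → ℝ} {a u C δ : ℝ}
    (hp : ∀ s ∈ Ioo a u, DifferentiableAt ℝ p s) (hg : ∀ s ∈ Ioo a u, DifferentiableAt ℝ g s)
    (hppos : ∀ s ∈ Ioo a u, 0 < p s) (hKpos : ∀ s ∈ Ioo a u, 0 < K s)
    (hbd : ∀ s ∈ Ioo a u, -C ≤ g s * (p s * K s * deriv g s))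
    (hdiv : ∀ s ∈ Ioo a u, 2 * C * p s ≤ δ * (K s * deriv p s)) :
    MonotoneOn (fun s => g s ^ 2 - δ / p s) (Ioo a u) := by
  have hderiv : ∀ s ∈ Ioo a u, HasDerivAt (fun s => g s ^ 2 - δ / p s)
      (2 * g s * deriv g s + δ * deriv p s / p s ^ 2) s := by
    intro s hs
    refine (((hg s hs).hasDerivAt.fun_pow 2).fun_sub
      ((hasDerivAt_const s δ).fun_div (hp s hs).hasDerivAt (hppos s hs).ne')).congr_deriv ?_
    ring
  refine monotoneOn_of_hasDerivWithinAt_nonneg (convex_Ioo a u)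
    (fun s hs => (hderiv s hs).continuousAt.continuousWithinAt)
    (fun s hs => (hderiv s (interior_subset hs)).hasDerivWithinAt) fun s hs => ?_
  rw [interior_Ioo] at hs
  exact two_mul_mul_add_mul_div_sq_nonneg (hppos s hs) (hKpos s hs) (hbd s hs) (hdiv s hs)

theorem eventually_mul_sq_lt_of_monotoneOn {p g : ℝ → ℝ} {a u δ : ℝ} (hau : a < u)
    (hpos : ∀ s ∈ Ioo a u, 0 < p s) (hp0 : Tendsto p (𝓝[>] a) (𝓝 0))
    (hmono : MonotoneOn (fun s => g s ^ 2 - δ / p s) (Ioo a u)) (hδ : 0 < δ) :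
    ∀ᶠ s in 𝓝[>] a, p s * g s ^ 2 < 2 * δ := by
  obtain ⟨t, hat, htu⟩ := exists_between hau
  have ht : t ∈ Ioo a u := ⟨hat, htu⟩
  have hsmall : ∀ᶠ s in 𝓝[>] a, p s * g t ^ 2 < δ := by
    simpa using (hp0.mul_const (g t ^ 2)).eventually (gt_mem_nhds (by rwa [zero_mul]))
  filter_upwards [Ioo_mem_nhdsGT hat, hsmall] with s hs hst
  have hs' : s ∈ Ioo a u := ⟨hs.1, hs.2.trans htu⟩
  have hps := hpos s hs'
  have hgs : g s ^ 2 ≤ g t ^ 2 + δ / p s := by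
    have hH : g s ^ 2 - δ / p s ≤ g t ^ 2 - δ / p t := hmono hs' ht hs.2.le
    have : 0 < δ / p t := div_pos hδ (hpos t ht)
    linarith
  calc p s * g s ^ 2 ≤ p s * (g t ^ 2 + δ / p s) := by gcongr
    _ = p s * g t ^ 2 + δ := by field_simp
    _ < 2 * δ := by linarith

theorem stmt_15_general (a b : ℝ) (hab : a < b) (p K g : ℝ → ℝ)
    (hp : ∀ s ∈ Ioo a b, DifferentiableAt ℝ p s) (hppos : ∀ s ∈ Ioo a b, 0 < p s)
    (hKpos : ∀ s ∈ Ioo a b, 0 < K s)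
    (hp0 : Tendsto p (nhdsWithin a (Ioo a b)) (nhds 0))
    (hg : ∀ s ∈ Ioo a b, DifferentiableAt ℝ g s)
    (hbd : ∃ C, ∀ᶠ s in nhdsWithin a (Ioo a b),
      |g s * (p s * K s * deriv g s)| ≤ C)
    (hdiv : Tendsto (fun s => K s * |deriv p s| / p s)
      (nhdsWithin a (Ioo a b)) atTop) :
    Tendsto (fun s => p s * g s ^ 2) (nhdsWithin a (Ioo a b)) (nhds 0) := by
  rw [nhdsWithin_Ioo_eq_nhdsGT hab] at hp0 hbd hdiv ⊢
  obtain ⟨C, hC⟩ := hbd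
  have hmem : ∀ᶠ s in 𝓝[>] a, s ∈ Ioo a b := Ioo_mem_nhdsGT hab
  refine tendsto_order.2 ⟨fun x hx => hmem.mono fun s hs => ?_, fun ε hε => ?_⟩
  · have := hppos s hs
    exact hx.trans_le (by positivity)
  obtain ⟨u, hau, hu⟩ := mem_nhdsGT_iff_exists_Ioo_subset.1
    (hmem.and (hC.and (hdiv.eventually_gt_atTop (2 * |C| / (ε / 2)))))
  have hub : ∀ s ∈ Ioo a u, s ∈ Ioo a b := fun s hs => (hu hs).1
  have hdiv_u : ∀ s ∈ Ioo a u, 2 * |C| / (ε / 2) < K s * |deriv p s| / p s :=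
    fun s hs => (hu hs).2.2
  have hp' : ∀ s ∈ Ioo a u, 0 < deriv p s := by
    refine deriv_pos_of_tendsto_nhdsGT_zero (fun s hs => hp s (hub s hs)) (fun s hs h => ?_)
      (fun s hs => hppos s (hub s hs)) hp0
    have := hdiv_u s hs
    rw [h, abs_zero, mul_zero, zero_div] at this
    exact this.not_ge (by positivity)
  have hbd_u : ∀ s ∈ Ioo a u, -|C| ≤ g s * (p s * K s * deriv g s) :=
    fun s hs => (neg_le_neg ((hu hs).2.1.trans (le_abs_self C))).trans (neg_abs_le _)
  have hdiv_u' : ∀ s ∈ Ioo a u, 2 * |C| * p s ≤ ε / 2 * (K s * deriv p s) := fun s hs => by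
    have := hdiv_u s hs
    rw [abs_of_pos (hp' s hs), div_lt_div_iff₀ (by positivity) (hppos s (hub s hs))] at this
    linarith
  have hmono := monotoneOn_sq_sub_div (fun s hs => hp s (hub s hs)) (fun s hs => hg s (hub s hs))
    (fun s hs => hppos s (hub s hs)) (fun s hs => hKpos s (hub s hs)) hbd_u hdiv_u'
  exact (eventually_mul_sq_lt_of_monotoneOn hau (fun s hs => hppos s (hub s hs)) hp0 hmono
    (half_pos hε)).mono fun s hs => hs.trans_eq (by ring)

/-- Core estimate of the lemma on vanishing of `p g²` at a singular endpoint: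
if `g p K g'` is bounded near `a`, `p → 0`, `p' ≠ 0` near `a` and
`K |p'| / p → ∞` at `a`, then `p g² → 0` at `a`. -/
theorem stmt_15 (a b : ℝ) (hab : a < b) (p K g : ℝ → ℝ)
    (hp : ∀ s ∈ Ioo a b, DifferentiableAt ℝ p s) (hppos : ∀ s ∈ Ioo a b, 0 < p s)
    (hK : ∀ s ∈ Ioo a b, DifferentiableAt ℝ K s) (hKpos : ∀ s ∈ Ioo a b, 0 < K s)
    (hp'ne : ∀ᶠ s in nhdsWithin a (Ioo a b), deriv p s ≠ 0)
    (hp0 : Tendsto p (nhdsWithin a (Ioo a b)) (nhds 0))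
    (hg : ∀ s ∈ Ioo a b, DifferentiableAt ℝ g s)
    (hbd : ∃ C, ∀ᶠ s in nhdsWithin a (Ioo a b),
      |g s * (p s * K s * deriv g s)| ≤ C)
    (hdiv : Tendsto (fun s => K s * |deriv p s| / p s)
      (nhdsWithin a (Ioo a b)) atTop) :
    Tendsto (fun s => p s * g s ^ 2) (nhdsWithin a (Ioo a b)) (nhds 0) :=
  stmt_15_general a b hab p K g hp hppos hKpos hp0 hg hbd hdiv
end
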